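/- Let A2 ∈ ℂ^{n×n}, F2 ∈ ℂ^{p×p}, C2 ∈ ℂ^{n×p}. (a) If X ∈ ℂ^{n×p} satisfies the conjugate-Sylvester equation A2^#X - X^#F2 = C2, then X satisfies the ordinary Sylvester equation A2A2^#X - XF2^#F2 = C2^#F2 + A2C2. (b) Consequently, if the spectra of A2A2^# and of F2^#F2 are disjoint, then the conjugate-Sylvester equation A2^#X - X^#F2 = C2 has at most one solution X ∈ ℂ^{n×p}. -/

import Mathlib

open Matrix Polynomial

/-- Entrywise complex conjugate of a complex matrix. -/
noncomputable def mconj {n m : Type*} (M : Matrix n m ℂ) : Matrix n m ℂ :=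
  M.map (starRingEnd ℂ)

lemma mconj_mul {n m k : Type*} [Fintype m] (M : Matrix n m ℂ) (N : Matrix m k ℂ) :
    mconj (M * N) = mconj M * mconj N :=
  Matrix.map_mul

lemma mconj_sub {n m : Type*} (M N : Matrix n m ℂ) :
    mconj (M - N) = mconj M - mconj N := by
  ext i j; simp [mconj]

lemma mconj_mconj {n m : Type*} (M : Matrix n m ℂ) : mconj (mconj M) = M := by
  ext i j; simp [mconj]

lemma pow_semiconj {n p : ℕ} (A : Matrix (Fin n) (Fin n) ℂ) (B : Matrix (Fin p) (Fin p) ℂ)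
    (D : Matrix (Fin n) (Fin p) ℂ) (h : A * D = D * B) (k : ℕ) :
    A ^ k * D = D * B ^ k := by
  induction k with
  | zero => simp
  | succ k ih =>
    rw [pow_succ, pow_succ, Matrix.mul_assoc, h, ← Matrix.mul_assoc, ih, Matrix.mul_assoc]

lemma aeval_semiconj {n p : ℕ} (A : Matrix (Fin n) (Fin n) ℂ) (B : Matrix (Fin p) (Fin p) ℂ)
    (D : Matrix (Fin n) (Fin p) ℂ) (h : A * D = D * B) (q : ℂ[X]) :
    (aeval A q) * D = D * (aeval B q) := by
  induction q using Polynomial.induction_on' with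
  | add f g hf hg => rw [map_add, map_add, Matrix.add_mul, Matrix.mul_add, hf, hg]
  | monomial k c =>
    simp only [aeval_monomial, Algebra.algebraMap_eq_smul_one, Matrix.smul_mul, Matrix.mul_smul,
      one_mul, pow_semiconj A B D h k]

lemma mem_spectrum_of_root {m : ℕ} (M : Matrix (Fin m) (Fin m) ℂ) {μ : ℂ}
    (h : M.charpoly.eval μ = 0) : μ ∈ spectrum ℂ M := by
  rw [spectrum.mem_iff]
  intro hu
  rw [Matrix.isUnit_iff_isUnit_det, isUnit_iff_ne_zero] at hu
  apply hu
  rw [Matrix.charpoly, _root_.eval_det, matPolyEquiv_charmatrix, eval_sub, eval_X, eval_C] at h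
  convert h using 2
  rfl

/-- every solution of the conjugate-Sylvester equation solves an
ordinary Sylvester equation, and under disjoint spectra of `A2A2^#` and `F2^#F2`
the conjugate-Sylvester equation has at most one solution. -/
theorem stmt_16 {n p : ℕ}
    (A2 : Matrix (Fin n) (Fin n) ℂ) (F2 : Matrix (Fin p) (Fin p) ℂ)
    (C2 : Matrix (Fin n) (Fin p) ℂ) :
    -- (a)
    (∀ X : Matrix (Fin n) (Fin p) ℂ,
      mconj A2 * X - mconj X * F2 = C2 →
      A2 * mconj A2 * X - X * (mconj F2 * F2) = mconj C2 * F2 + A2 * C2) ∧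
    -- (b)
    ((∀ α ∈ spectrum ℂ (A2 * mconj A2), α ∉ spectrum ℂ (mconj F2 * F2)) →
      ∀ X Y : Matrix (Fin n) (Fin p) ℂ,
        mconj A2 * X - mconj X * F2 = C2 →
        mconj A2 * Y - mconj Y * F2 = C2 → X = Y) := by
  have part_a : ∀ X : Matrix (Fin n) (Fin p) ℂ,
      mconj A2 * X - mconj X * F2 = C2 →
      A2 * mconj A2 * X - X * (mconj F2 * F2) = mconj C2 * F2 + A2 * C2 := by
    intro X hX
    have h2 : A2 * mconj X - X * mconj F2 = mconj C2 := by
      have := congrArg mconj hX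
      rwa [mconj_sub, mconj_mul, mconj_mul, mconj_mconj, mconj_mconj] at this
    have key : A2 * mconj A2 * X - X * (mconj F2 * F2)
        = A2 * (mconj A2 * X - mconj X * F2) + (A2 * mconj X - X * mconj F2) * F2 := by
      rw [Matrix.mul_sub, Matrix.sub_mul, ← Matrix.mul_assoc A2 (mconj X) F2,
        sub_add_sub_cancel, ← Matrix.mul_assoc, Matrix.mul_assoc]
    rw [key, hX, h2, add_comm]
  refine ⟨part_a, ?_⟩
  intro hdisj X Y hX hY
  rcases Nat.eq_zero_or_pos n with hn | hn
  · subst hn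
    ext i j
    exact i.elim0
  have hA := part_a X hX
  have hB := part_a Y hY
  set A := A2 * mconj A2 with hAdef
  set B := mconj F2 * F2 with hBdef
  set D := X - Y with hD
  have hsemi : A * D = D * B := by
    have h3 : A * X - X * B = A * Y - Y * B := hA.trans hB.symm
    rw [sub_eq_sub_iff_sub_eq_sub] at h3
    rw [hD, Matrix.mul_sub, Matrix.sub_mul, h3]
  have hzero : D * (aeval B (Matrix.charpoly A)) = 0 := by
    rw [← aeval_semiconj A B D hsemi, Matrix.aeval_self_charpoly, Matrix.zero_mul]
  have hdeg : 0 < (Matrix.charpoly A).degree := by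
    rw [Matrix.charpoly_degree_eq_dim]
    simpa using hn
  have hunit : IsUnit (aeval B (Matrix.charpoly A)) := by
    rw [← spectrum.zero_notMem_iff ℂ,
      spectrum.map_polynomial_aeval_of_degree_pos B (Matrix.charpoly A) hdeg]
    rintro ⟨μ, hμ, hev⟩
    exact hdisj μ (mem_spectrum_of_root A hev) hμ
  obtain ⟨u, hu⟩ := hunit
  have hD0 : D = 0 := by
    have h4 : D * ((aeval B) A.charpoly * (↑u⁻¹ : Matrix (Fin p) (Fin p) ℂ)) = D := by
      rw [← hu, Units.mul_inv, Matrix.mul_one]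
    rw [← h4, ← Matrix.mul_assoc, hzero, Matrix.zero_mul]
  exact sub_eq_zero.mp hD0
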